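/- There is a short exact sequence of R-bimodules 0 → R → B_s → R_s → 0, where R → B_s sends 1 ↦ Δ_s, and B_s → R_s sends f ⊗ g ↦ f·s(g). -/

import Mathlib

/-!
Since `s` is the identity modulo `α` and `s(α) = -α`, every `f ∈ R` splits as `c + d·s(δ)` with
`c, d ∈ R^s`; hence `B_s` is spanned over `R ⊗ 1` by `1 ⊗ 1` and `1 ⊗ s(δ)`. In these coordinates
`a ⊗ 1 + b ⊗ s(δ)` maps to `a + b·δ`, so it lies in the kernel exactly when it equals `-b·Δ_s`.
Multiplication `B_s → R` sends `f·Δ_s` to `f·α`, and `α ≠ 0` gives injectivity of `f ↦ f·Δ_s`.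
-/

open MvPolynomial

/-- The linear polynomial in `R = Sym(𝔥*)` corresponding to the element of `𝔥*`
with coordinates `φ` (identifying `𝔥` with `Fin n → k` so that `𝔥*` has dual basis
corresponding to the variables `X i`). -/
noncomputable def lin {k : Type*} [CommRing k] {n : ℕ} (φ : Fin n → k) :
    MvPolynomial (Fin n) k :=
  ∑ i, C (φ i) * X i

/-- The reflection `s` acting on `R = Sym(𝔥*)`, induced by
`s(γ) = γ - ⟨α^∨, γ⟩·α` on `𝔥*`, where `α^∨ ∈ 𝔥` has coordinates `αv` and
`α ∈ 𝔥*` has coordinates `α`. -/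
noncomputable def sRefl {k : Type*} [CommRing k] {n : ℕ} (αv α : Fin n → k) :
    MvPolynomial (Fin n) k →ₐ[k] MvPolynomial (Fin n) k :=
  aeval (fun i => X i - C (αv i) * lin α)

/-- The subalgebra `R^s` of `s`-invariants. -/
noncomputable def invSub {k : Type*} [CommRing k] {n : ℕ} (αv α : Fin n → k) :
    Subalgebra k (MvPolynomial (Fin n) k) :=
  AlgHom.equalizer (sRefl αv α) (AlgHom.id k (MvPolynomial (Fin n) k))

open scoped TensorProduct

section Reflection

variable {k : Type*} [CommRing k] {n : ℕ} (αv α : Fin n → k)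

lemma sRefl_X (i : Fin n) : sRefl αv α (X i) = X i - C (αv i) * lin α :=
  aeval_X _ i

lemma sRefl_C (a : k) : sRefl αv α (C a) = C a :=
  aeval_C _ a

lemma sRefl_lin (φ : Fin n → k) :
    sRefl αv α (lin φ) = lin φ - C (∑ i, αv i * φ i) * lin α := by
  simp only [lin, map_sum, map_mul, sRefl_C, sRefl_X, mul_sub, Finset.sum_sub_distrib,
    Finset.sum_mul, mul_assoc, mul_left_comm (C (φ _))]

lemma sRefl_lin_self (hpair : ∑ i, αv i * α i = 2) : sRefl αv α (lin α) = -lin α := by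
  rw [sRefl_lin, hpair, map_ofNat]
  ring

lemma sRefl_lin_of_pairing_eq_one {δ : Fin n → k} (hδ : ∑ i, αv i * δ i = 1) :
    sRefl αv α (lin δ) = lin δ - lin α := by
  rw [sRefl_lin, hδ, map_one, one_mul]

lemma sRefl_sRefl (hpair : ∑ i, αv i * α i = 2) (f : MvPolynomial (Fin n) k) :
    sRefl αv α (sRefl αv α f) = f := by
  suffices (sRefl αv α).comp (sRefl αv α) = AlgHom.id k _ from AlgHom.congr_fun this f
  refine algHom_ext fun i => ?_
  simp only [AlgHom.comp_apply, AlgHom.id_apply, sRefl_X, map_sub, map_mul, sRefl_C,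
    sRefl_lin_self αv α hpair]
  ring

/-- Holds because `s` moves each variable by a multiple of `α`. -/
lemma lin_dvd_sub_sRefl (f : MvPolynomial (Fin n) k) : lin α ∣ f - sRefl αv α f := by
  let mk := Ideal.Quotient.mkₐ k (Ideal.span {lin α})
  have hmk : mk.comp (sRefl αv α) = mk := algHom_ext fun i => by
    simp [mk, sRefl_X]
  rw [← Ideal.mem_span_singleton, ← Ideal.Quotient.mk_eq_mk_iff_sub_mem]
  exact (AlgHom.congr_fun hmk f).symm

lemma lin_ne_zero [Nontrivial k] {φ : Fin n → k} (hφ : ∃ v : Fin n → k, ∑ i, φ i * v i = 1) :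
    lin φ ≠ 0 := by
  obtain ⟨v, hv⟩ := hφ
  intro h
  simpa [lin, hv] using congrArg (eval v) h

/-- The witness is `d = -(f - s f)/α`, invariant because `f - s f` and `α` are both
anti-invariant. -/
lemma exists_invSub_add_mul_sRefl_lin [IsDomain k] (hpair : ∑ i, αv i * α i = 2)
    (hα : lin α ≠ 0) {δ : Fin n → k} (hδ : ∑ i, αv i * δ i = 1) (f : MvPolynomial (Fin n) k) :
    ∃ c ∈ invSub αv α, ∃ d ∈ invSub αv α, f = c + d * sRefl αv α (lin δ) := by
  obtain ⟨q, hq⟩ := lin_dvd_sub_sRefl αv α f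
  have hsq : sRefl αv α q = q := by
    have h := congrArg (sRefl αv α) hq
    rw [map_sub, map_mul, sRefl_sRefl αv α hpair, sRefl_lin_self αv α hpair] at h
    refine mul_right_cancel₀ hα ?_
    linear_combination h + hq
  refine ⟨f + q * sRefl αv α (lin δ), ?_, -q, by simp [invSub, hsq], by ring⟩
  rw [invSub, AlgHom.mem_equalizer, AlgHom.id_apply, map_add, map_mul, hsq, sRefl_sRefl αv α hpair, sRefl_lin_of_pairing_eq_one αv α hδ]
  linear_combination -hq

end Reflection

section Bimodule

variable {k : Type*} [CommRing k] {n : ℕ} (αv α : Fin n → k)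

local notation "Rˢ" => invSub αv α
local notation "R" => MvPolynomial (Fin n) k

noncomputable def sReflOverInvSub : R →ₐ[Rˢ] R :=
  { sRefl αv α with commutes' := fun c => c.2 }

noncomputable def twistedMul : R ⊗[Rˢ] R →ₐ[Rˢ] R :=
  Algebra.TensorProduct.productMap (AlgHom.id _ _) (sReflOverInvSub αv α)

lemma twistedMul_tmul (f g : R) : twistedMul αv α (f ⊗ₜ g) = f * sRefl αv α g :=
  Algebra.TensorProduct.productMap_apply_tmul _ _ f g

noncomputable def deltaS (δ : Fin n → k) : R ⊗[Rˢ] R :=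
  lin δ ⊗ₜ 1 - 1 ⊗ₜ sRefl αv α (lin δ)

lemma tmul_one_mul_deltaS (δ : Fin n → k) (f : R) :
    f ⊗ₜ[Rˢ] (1 : R) * deltaS αv α δ = (f * lin δ) ⊗ₜ 1 - f ⊗ₜ sRefl αv α (lin δ) := by
  simp [deltaS, mul_sub, Algebra.TensorProduct.tmul_mul_tmul]

lemma twistedMul_deltaS (hpair : ∑ i, αv i * α i = 2) (δ : Fin n → k) :
    twistedMul αv α (deltaS αv α δ) = 0 := by
  simp [deltaS, twistedMul_tmul, sRefl_sRefl αv α hpair]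

lemma lmul'_deltaS {δ : Fin n → k} (hδ : ∑ i, αv i * δ i = 1) :
    Algebra.TensorProduct.lmul' Rˢ (deltaS αv α δ) = lin α := by
  simp [deltaS, sRefl_lin_of_pairing_eq_one αv α hδ]

lemma tmul_mul_of_mem_invSub {c : R} (hc : c ∈ Rˢ) (f g : R) :
    f ⊗ₜ[Rˢ] (c * g) = (c * f) ⊗ₜ g :=
  (TensorProduct.smul_tmul (⟨c, hc⟩ : Rˢ) f g).symm

variable [IsDomain k] {δ : Fin n → k}

lemma exists_eq_tmul_one_add_tmul_sRefl_lin (hpair : ∑ i, αv i * α i = 2) (hα : lin α ≠ 0)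
    (hδ : ∑ i, αv i * δ i = 1) (x : R ⊗[Rˢ] R) :
    ∃ a b : R, x = a ⊗ₜ 1 + b ⊗ₜ sRefl αv α (lin δ) := by
  induction x using TensorProduct.induction_on with
  | zero => exact ⟨0, 0, by simp⟩
  | tmul f g =>
    obtain ⟨c, hc, d, hd, rfl⟩ := exists_invSub_add_mul_sRefl_lin αv α hpair hα hδ g
    refine ⟨c * f, d * f, ?_⟩
    rw [TensorProduct.tmul_add, ← mul_one c, tmul_mul_of_mem_invSub αv α hc,
      tmul_mul_of_mem_invSub αv α hd, mul_one]
  | add x y hx hy =>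
    obtain ⟨a, b, rfl⟩ := hx
    obtain ⟨a', b', rfl⟩ := hy
    refine ⟨a + a', b + b', ?_⟩
    rw [TensorProduct.add_tmul, TensorProduct.add_tmul]
    abel

lemma twistedMul_eq_zero_iff (hpair : ∑ i, αv i * α i = 2) (hα : lin α ≠ 0)
    (hδ : ∑ i, αv i * δ i = 1) (x : R ⊗[Rˢ] R) :
    twistedMul αv α x = 0 ↔ ∃ f : R, x = f ⊗ₜ 1 * deltaS αv α δ := by
  refine ⟨fun hx => ?_, ?_⟩
  · obtain ⟨a, b, rfl⟩ := exists_eq_tmul_one_add_tmul_sRefl_lin αv α hpair hα hδ x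
    rw [map_add, twistedMul_tmul, twistedMul_tmul, map_one, mul_one,
      sRefl_sRefl αv α hpair, add_eq_zero_iff_eq_neg] at hx
    refine ⟨-b, ?_⟩
    rw [tmul_one_mul_deltaS, hx, neg_mul, TensorProduct.neg_tmul, TensorProduct.neg_tmul,
      sub_neg_eq_add]
  · rintro ⟨f, rfl⟩
    rw [map_mul, twistedMul_deltaS αv α hpair, mul_zero]

lemma injective_tmul_one_mul_deltaS (hα : lin α ≠ 0) (hδ : ∑ i, αv i * δ i = 1) :
    Function.Injective fun f : R => f ⊗ₜ[Rˢ] (1 : R) * deltaS αv α δ := by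
  intro f g hfg
  have h := congrArg (Algebra.TensorProduct.lmul' Rˢ) hfg
  simp only [map_mul, lmul'_deltaS αv α hδ, Algebra.TensorProduct.lmul'_apply_tmul, mul_one] at h
  exact mul_right_cancel₀ hα h

end Bimodule

/-- There is a short exact sequence of `R`-bimodules
`0 → R → B_s → R_s → 0`, where `R → B_s` sends `1 ↦ Δ_s = δ⊗1 − 1⊗s(δ)` and
`B_s → R_s` sends `f ⊗ g ↦ f·s(g)`.  That is: the map `p : B_s → R_s` with
`p(f ⊗ g) = f·s(g)` is a well-defined (twisted-right-linear) surjection, the map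
`R → B_s`, `f ↦ f·Δ_s` is injective, and the kernel of `p` is exactly `R·Δ_s`. -/
theorem ses_R_Bs_Rs {k : Type*} [CommRing k] [IsDomain k] {n : ℕ}
    (αv α : Fin n → k) (hpair : ∑ i, αv i * α i = 2)
    (δ : Fin n → k) (hδ : ∑ i, αv i * δ i = 1)
    (hDS2 : ∃ v : Fin n → k, ∑ i, α i * v i = 1) :
    ∃ p : (MvPolynomial (Fin n) k ⊗[↥(invSub αv α)] MvPolynomial (Fin n) k) →ₗ[k]
        MvPolynomial (Fin n) k,
      (∀ f g : MvPolynomial (Fin n) k,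
        p (f ⊗ₜ[↥(invSub αv α)] g) = f * sRefl αv α g) ∧
      Function.Surjective p ∧
      (∀ (x : MvPolynomial (Fin n) k ⊗[↥(invSub αv α)] MvPolynomial (Fin n) k)
          (g : MvPolynomial (Fin n) k),
        p (x * ((1 : MvPolynomial (Fin n) k) ⊗ₜ[↥(invSub αv α)] g)) = p x * sRefl αv α g) ∧
      Function.Injective (fun f : MvPolynomial (Fin n) k =>
        (f ⊗ₜ[↥(invSub αv α)] (1 : MvPolynomial (Fin n) k)) *
          (lin δ ⊗ₜ[↥(invSub αv α)] (1 : MvPolynomial (Fin n) k)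
            - (1 : MvPolynomial (Fin n) k) ⊗ₜ[↥(invSub αv α)] sRefl αv α (lin δ))) ∧
      (∀ x : MvPolynomial (Fin n) k ⊗[↥(invSub αv α)] MvPolynomial (Fin n) k,
        p x = 0 ↔ ∃ f : MvPolynomial (Fin n) k,
          x = (f ⊗ₜ[↥(invSub αv α)] (1 : MvPolynomial (Fin n) k)) *
            (lin δ ⊗ₜ[↥(invSub αv α)] (1 : MvPolynomial (Fin n) k)
              - (1 : MvPolynomial (Fin n) k) ⊗ₜ[↥(invSub αv α)] sRefl αv α (lin δ))) := by
  have hα := lin_ne_zero hDS2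
  refine ⟨(twistedMul αv α).toLinearMap.restrictScalars k, twistedMul_tmul αv α,
    fun f => ⟨f ⊗ₜ 1, by simp [twistedMul_tmul]⟩, fun x g => by simp [twistedMul_tmul],
    injective_tmul_one_mul_deltaS αv α hα hδ, twistedMul_eq_zero_iff αv α hpair hα hδ⟩
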